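/- arXiv:2506.01179 — 2 statements merged into one kernel-verified Lean document; each statement's English description precedes it below -/
import Mathlib

section
/- Let M be a module over an integral domain R. The divisor topology D(M) is a nested space (its open sets are totally ordered by inclusion) if and only if M is a uniserial module. -/
/-!
Since `[n] ∈ U_m` means `Rm ≤ Rn`, the basic open `U_m` is contained in `U_n` exactly when
`Rn ≤ Rm`. So the basic opens form a chain iff the cyclic submodules `Rm` with `m ∈ M^#` do; the
remaining cyclic submodules are `0` and `M`, and the cyclic submodules form a chain iff all
submodules do. Finally, comparability with a fixed family of sets survives intersections and
unions, so a topology generated by a chain is nested.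
-/

open Submodule

variable (R M : Type) [CommRing R] [IsDomain R] [AddCommGroup M] [Module R M]

/-- The set of nonzero nongenerators of `M`. -/
def Msharp : Set M := {m | m ≠ 0 ∧ Submodule.span R {m} ≠ ⊤}

/-- Equivalence: `m ∼ n` iff `Rm = Rn`. -/
def divSetoid : Setoid (Msharp R M) :=
  ⟨fun a b => Submodule.span R {a.1} = Submodule.span R {b.1},
    ⟨fun _ => rfl, fun h => h.symm, fun h₁ h₂ => h₁.trans h₂⟩⟩

/-- `EC(M^#)`: the set of equivalence classes. -/
def EC := Quotient (divSetoid R M)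

/-- The class `[n]` of `n ∈ M^#`. -/
def cls (n : Msharp R M) : EC R M := Quotient.mk (divSetoid R M) n

/-- `U_m = {[n] : n ∣ m}` where `n ∣ m` means `m ∈ Rn`. -/
def Uset (m : M) : Set (EC R M) :=
  {c | ∃ n : Msharp R M, cls R M n = c ∧ m ∈ Submodule.span R {n.1}}

/-- The divisor topology `D(M)`. -/
def divTop : TopologicalSpace (EC R M) :=
  TopologicalSpace.generateFrom {s | ∃ m ∈ Msharp R M, s = Uset R M m}

theorem TopologicalSpace.GenerateOpen.subset_or_superset {α : Type*} {S F : Set (Set α)}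
    (hSF : ∀ s ∈ S, ∀ t ∈ F, s ⊆ t ∨ t ⊆ s) {O : Set α} (hO : GenerateOpen S O) :
    ∀ t ∈ F, O ⊆ t ∨ t ⊆ O := by
  induction hO with
  | basic s hs => exact hSF s hs
  | univ => exact fun t _ => Or.inr (Set.subset_univ t)
  | inter O₁ O₂ _ _ ih₁ ih₂ =>
    intro t ht
    rcases ih₁ t ht with h₁ | h₁
    · exact Or.inl (Set.inter_subset_left.trans h₁)
    rcases ih₂ t ht with h₂ | h₂
    · exact Or.inl (Set.inter_subset_right.trans h₂)
    · exact Or.inr (Set.subset_inter h₁ h₂)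
  | sUnion 𝒪 _ ih =>
    intro t ht
    by_cases h : ∀ O ∈ 𝒪, O ⊆ t
    · exact Or.inl (Set.sUnion_subset h)
    push Not at h
    obtain ⟨O, hO, hOt⟩ := h
    exact Or.inr (((ih O hO t ht).resolve_left hOt).trans (Set.subset_sUnion_of_mem hO))

theorem TopologicalSpace.isOpen_total_of_isChain {α : Type*} {S : Set (Set α)}
    (hS : IsChain (· ⊆ ·) S) (O₁ O₂ : Set α) (h₁ : (generateFrom S).IsOpen O₁)
    (h₂ : (generateFrom S).IsOpen O₂) : O₁ ⊆ O₂ ∨ O₂ ⊆ O₁ := by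
  have hS₁ : ∀ s ∈ S, O₁ ⊆ s ∨ s ⊆ O₁ :=
    GenerateOpen.subset_or_superset (fun s hs t ht => hS.total hs ht) h₁
  have hS₁' : ∀ s ∈ S, ∀ t ∈ ({O₁} : Set (Set α)), s ⊆ t ∨ t ⊆ s := by
    rintro s hs t rfl
    exact (hS₁ s hs).symm
  exact (GenerateOpen.subset_or_superset hS₁' h₂ O₁ rfl).symm

theorem Submodule.le_total_of_span_singleton {R M : Type*} [Semiring R] [AddCommMonoid M]
    [Module R M] (h : ∀ m n : M, R ∙ m ≤ R ∙ n ∨ R ∙ n ≤ R ∙ m) (N L : Submodule R M) :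
    N ≤ L ∨ L ≤ N := by
  refine or_iff_not_imp_left.2 fun hNL l hl => ?_
  obtain ⟨n, hnN, hnL⟩ := SetLike.not_le_iff_exists.1 hNL
  rcases h n l with hle | hle
  · exact (hnL ((span_singleton_le_iff_mem n L).1
      (hle.trans ((span_singleton_le_iff_mem l L).2 hl)))).elim
  · exact (span_singleton_le_iff_mem l N).1 (hle.trans ((span_singleton_le_iff_mem n N).2 hnN))

section

omit [IsDomain R]

theorem span_singleton_le_or_ge_of_notMem_Msharp {m : M} (hm : m ∉ Msharp R M)
    (N : Submodule R M) : R ∙ m ≤ N ∨ N ≤ R ∙ m := by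
  by_cases hm₀ : m = 0
  · exact Or.inl (by simp [hm₀])
  · have hm_top : R ∙ m = ⊤ := by_contra fun h => hm ⟨hm₀, h⟩
    exact Or.inr (hm_top ▸ le_top)

theorem cls_mem_Uset {m : M} (hm : m ∈ Msharp R M) : cls R M ⟨m, hm⟩ ∈ Uset R M m :=
  ⟨⟨m, hm⟩, rfl, mem_span_singleton_self m⟩

theorem Uset_subset_Uset_iff {m n : M} (hm : m ∈ Msharp R M) :
    Uset R M m ⊆ Uset R M n ↔ R ∙ n ≤ R ∙ m := by
  constructor
  · intro h
    obtain ⟨k, hk, hnk⟩ := h (cls_mem_Uset R M hm)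
    have hkm : R ∙ k.1 = R ∙ m := Quotient.exact hk
    rwa [span_singleton_le_iff_mem, ← hkm]
  · rintro h _ ⟨k, rfl, hmk⟩
    exact ⟨k, rfl, (span_singleton_le_iff_mem _ _).1
      (h.trans ((span_singleton_le_iff_mem _ _).2 hmk))⟩

theorem isOpen_Uset {m : M} (hm : m ∈ Msharp R M) : (divTop R M).IsOpen (Uset R M m) :=
  TopologicalSpace.isOpen_generateFrom_of_mem ⟨m, hm, rfl⟩

end

theorem nested_iff_uniserial :
    (∀ O₁ O₂ : Set (EC R M), (divTop R M).IsOpen O₁ → (divTop R M).IsOpen O₂ →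
      O₁ ⊆ O₂ ∨ O₂ ⊆ O₁) ↔
    (∀ N L : Submodule R M, N ≤ L ∨ L ≤ N) := by
  refine ⟨fun hnested => le_total_of_span_singleton fun m n => ?_, fun huniserial => ?_⟩
  · by_cases hm : m ∈ Msharp R M
    · by_cases hn : n ∈ Msharp R M
      · rw [← Uset_subset_Uset_iff R M hn, ← Uset_subset_Uset_iff R M hm]
        exact hnested _ _ (isOpen_Uset R M hn) (isOpen_Uset R M hm)
      · exact (span_singleton_le_or_ge_of_notMem_Msharp R M hn _).symm
    · exact span_singleton_le_or_ge_of_notMem_Msharp R M hm _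
  · refine TopologicalSpace.isOpen_total_of_isChain ?_
    rintro _ ⟨m, hm, rfl⟩ _ ⟨n, hn, rfl⟩ -
    dsimp only
    rw [Uset_subset_Uset_iff R M hm, Uset_subset_Uset_iff R M hn]
    exact (huniserial _ _).symm
end

section
/- Let M be a module over an integral domain R. If the divisor topology D(M) is compact, then the socle of M is finitely generated and is an essential submodule of M; in particular, M is finitely cogenerated. -/
open Submodule

variable (R M : Type) [CommRing R] [IsDomain R] [AddCommGroup M] [Module R M]

/-! A finite subcover of `D(M)` by the basic opens `U_n` yields finitely many nonzero cyclic
submodules `Rn` such that every nonzero submodule contains one of them (when `Rx = M`, one uses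
that `M` is not simple to find a nonzero proper cyclic submodule). In any lattice, a finite set of
nonzero elements lying below every nonzero element makes the lattice atomic with finitely many
atoms. So the socle is a finite sum of simple, hence cyclic, submodules; it is essential because
every nonzero submodule contains an atom; and if `⨅ i, f i = ⊥`, choosing for each atom some
`f i` not containing it gives a finite subfamily with trivial intersection. -/

section FiniteCoinitial

variable {α : Type*} [PartialOrder α] [OrderBot α] {T : Set α}

theorem IsAtomic.of_finite_forall_exists_le (hTfin : T.Finite) (hT : ⊥ ∉ T)
    (hle : ∀ x, x ≠ ⊥ → ∃ t ∈ T, t ≤ x) : IsAtomic α := by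
  refine ⟨fun x => or_iff_not_imp_left.2 fun hx => ?_⟩
  obtain ⟨a, ⟨haT, hax⟩, hmin⟩ := (hTfin.sep (· ≤ x)).exists_minimal (hle x hx)
  refine ⟨a, ⟨ne_of_mem_of_not_mem haT hT, fun b hba => ?_⟩, hax⟩
  by_contra hb
  obtain ⟨t, htT, htb⟩ := hle b hb
  exact (htb.trans_lt hba).not_ge (hmin ⟨htT, htb.trans (hba.le.trans hax)⟩ (htb.trans hba.le))

theorem setOf_isAtom_subset_of_forall_exists_le (hT : ⊥ ∉ T)
    (hle : ∀ x, x ≠ ⊥ → ∃ t ∈ T, t ≤ x) : {a : α | IsAtom a} ⊆ T := by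
  intro a ha
  obtain ⟨t, htT, hta⟩ := hle a ha.1
  exact (ha.le_iff_eq (ne_of_mem_of_not_mem htT hT)).1 hta ▸ htT

end FiniteCoinitial

section AtomicCompleteLattice

variable {α : Type*} [CompleteLattice α] [IsAtomic α]

theorem eq_bot_of_sSup_setOf_isAtom_inf_eq_bot {x : α} (h : sSup {a : α | IsAtom a} ⊓ x = ⊥) :
    x = ⊥ := by
  refine (eq_bot_or_exists_atom_le x).resolve_right fun ⟨a, ha, hax⟩ => ha.1 ?_
  exact le_bot_iff.1 (h ▸ le_inf (le_sSup ha) hax)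

theorem exists_finset_iInf_eq_bot_of_finite_setOf_isAtom (hfin : {a : α | IsAtom a}.Finite)
    {ι : Type*} (f : ι → α) (hf : ⨅ i, f i = ⊥) : ∃ s : Finset ι, ⨅ i ∈ s, f i = ⊥ := by
  have hsep : ∀ a : {a : α | IsAtom a}, ∃ i, ¬ (a : α) ≤ f i := by
    by_contra! h
    obtain ⟨a, ha⟩ := h
    exact a.2.1 (le_bot_iff.1 (hf ▸ le_iInf ha))
  choose g hg using hsep
  have := hfin.to_subtype
  refine ⟨(Set.finite_range g).toFinset, (eq_bot_or_exists_atom_le _).resolve_right ?_⟩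
  rintro ⟨a, ha, hle⟩
  exact hg ⟨a, ha⟩ (hle.trans (biInf_le f (by simp)))

end AtomicCompleteLattice

theorem Submodule.fg_of_isAtom {R M : Type*} [Ring R] [AddCommGroup M] [Module R M]
    {N : Submodule R M} (hN : IsAtom N) : N.FG := by
  obtain ⟨x, hxN, hx0⟩ := (Submodule.ne_bot_iff N).1 hN.1
  have hx : span R {x} = N :=
    (hN.le_iff_eq (by simpa using hx0)).1 ((span_singleton_le_iff_mem _ _).2 hxN)
  exact hx ▸ ⟨{x}, by simp⟩

theorem Submodule.fg_sSup_setOf_isAtom {R M : Type*} [Ring R] [AddCommGroup M] [Module R M]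
    (hfin : {N : Submodule R M | IsAtom N}.Finite) : (sSup {N : Submodule R M | IsAtom N}).FG := by
  have := hfin.to_subtype
  rw [sSup_eq_iSup']
  exact fg_iSup _ fun N => fg_of_isAtom N.2

section DivisorTopology

variable {R M : Type} [CommRing R] [AddCommGroup M] [Module R M]

theorem cls_mem_Uset_iff {y : Msharp R M} {m : M} :
    cls R M y ∈ Uset R M m ↔ m ∈ span R {(y : M)} :=
  ⟨fun ⟨n, hn, hm⟩ => (Quotient.exact hn : span R {(n : M)} = span R {(y : M)}) ▸ hm,
    fun h => ⟨y, rfl, h⟩⟩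

theorem Msharp_nonempty [Nontrivial M] (hM : ¬ IsSimpleModule R M) : (Msharp R M).Nonempty := by
  by_contra h
  refine hM { eq_bot_or_eq_top := fun N => or_iff_not_imp_left.2 fun hN => ?_ }
  obtain ⟨x, hxN, hx0⟩ := (Submodule.ne_bot_iff N).1 hN
  have hx : span R {x} = ⊤ := by
    by_contra hx
    exact h ⟨x, hx0, hx⟩
  exact eq_top_iff.2 (hx ▸ (span_singleton_le_iff_mem _ _).2 hxN)

theorem exists_finset_forall_mem_Msharp_exists_mem_span
    (hc : @CompactSpace (EC R M) (divTop R M)) :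
    ∃ t : Finset (Msharp R M), ∀ x ∈ Msharp R M, ∃ n ∈ t, (n : M) ∈ span R {x} := by
  let := divTop R M
  have hopen (n : Msharp R M) : IsOpen (Uset R M n) :=
    TopologicalSpace.isOpen_generateFrom_of_mem ⟨n, n.2, rfl⟩
  have hcover : Set.univ ⊆ ⋃ n : Msharp R M, Uset R M n := by
    rintro c -
    obtain ⟨y, rfl⟩ := Quotient.exists_rep c
    exact Set.mem_iUnion.2 ⟨y, cls_mem_Uset_iff (y := y) |>.2 (mem_span_singleton_self _)⟩
  obtain ⟨t, ht⟩ := isCompact_univ.elim_finite_subcover _ hopen hcover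
  refine ⟨t, fun x hx => ?_⟩
  obtain ⟨n, hn, hxn⟩ := Set.mem_iUnion₂.1 (ht (Set.mem_univ (cls R M ⟨x, hx⟩)))
  exact ⟨n, hn, cls_mem_Uset_iff (y := ⟨x, hx⟩) |>.1 hxn⟩

theorem exists_finset_forall_ne_zero_exists_mem_span (hM : ¬ IsSimpleModule R M)
    (hc : @CompactSpace (EC R M) (divTop R M)) :
    ∃ t : Finset (Msharp R M), ∀ x : M, x ≠ 0 → ∃ n ∈ t, (n : M) ∈ span R {x} := by
  obtain ⟨t, ht⟩ := exists_finset_forall_mem_Msharp_exists_mem_span hc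
  refine ⟨t, fun x hx => ?_⟩
  by_cases hxtop : span R {x} = ⊤
  · have := nontrivial_of_ne x 0 hx
    obtain ⟨y, hy⟩ := Msharp_nonempty hM
    obtain ⟨n, hn, -⟩ := ht y hy
    exact ⟨n, hn, hxtop ▸ mem_top⟩
  · exact ht x ⟨hx, hxtop⟩

theorem exists_finite_forall_ne_bot_exists_le_of_compactSpace (hM : ¬ IsSimpleModule R M)
    (hc : @CompactSpace (EC R M) (divTop R M)) :
    ∃ T : Set (Submodule R M), T.Finite ∧ ⊥ ∉ T ∧ ∀ L, L ≠ ⊥ → ∃ N ∈ T, N ≤ L := by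
  obtain ⟨t, ht⟩ := exists_finset_forall_ne_zero_exists_mem_span hM hc
  refine ⟨(fun n : Msharp R M => span R {(n : M)}) '' t, t.finite_toSet.image _, ?_,
    fun L hL => ?_⟩
  · rintro ⟨n, -, hn⟩
    exact n.2.1 (span_singleton_eq_bot.1 hn)
  · obtain ⟨x, hxL, hx0⟩ := (Submodule.ne_bot_iff L).1 hL
    obtain ⟨n, hn, hnx⟩ := ht x hx0
    have hxL : span R {x} ≤ L := (span_singleton_le_iff_mem _ _).2 hxL
    exact ⟨_, ⟨n, hn, rfl⟩, (span_singleton_le_iff_mem _ _).2 (hxL hnx)⟩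

end DivisorTopology

theorem compact_implies_finitely_cogenerated
    (hM : ¬ IsSimpleModule R M)
    (hc : @CompactSpace (EC R M) (divTop R M)) :
    (sSup {N : Submodule R M | IsSimpleModule R N}).FG ∧
    (∀ L : Submodule R M,
      sSup {N : Submodule R M | IsSimpleModule R N} ⊓ L = ⊥ → L = ⊥) ∧
    (∀ (ι : Type) (f : ι → Submodule R M), (⨅ i, f i) = ⊥ →
      ∃ s : Finset ι, (⨅ i ∈ s, f i) = ⊥) := by
  obtain ⟨T, hTfin, hT, hle⟩ := exists_finite_forall_ne_bot_exists_le_of_compactSpace hM hc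
  have := IsAtomic.of_finite_forall_exists_le hTfin hT hle
  have hfin := hTfin.subset (setOf_isAtom_subset_of_forall_exists_le hT hle)
  simp only [isSimpleModule_iff_isAtom]
  exact ⟨Submodule.fg_sSup_setOf_isAtom hfin, fun _ => eq_bot_of_sSup_setOf_isAtom_inf_eq_bot,
    fun _ f => exists_finset_iInf_eq_bot_of_finite_setOf_isAtom hfin f⟩
end
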